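/- arXiv:1807.03368 — 8 statements merged into one kernel-verified Lean document; each statement's English description precedes it below -/
import Mathlib

section
/- If d is a pseudometric on a set Ω, then the Fermat distance d_F(A_1,...,A_n) = inf_{B ∈ Ω} Σ_{i=1}^n d(A_i, B) satisfies the generalized triangle inequality: d_F(A_1,...,A_n) ≤ Σ_{i=1}^n d_F(A_1,...,A_{i-1},A_{n+1},A_{i+1},...,A_n) for any A_1,...,A_{n+1} ∈ Ω (assuming all the infima are attained). -/
/-!
Let `Bᵢ` be a Fermat point of the configuration with `Aᵢ` replaced by `A'`. Moving the `i`-th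
point back from `A'` to `Aᵢ` costs at most `d(Aᵢ, A')`, so `dF A ≤ d(Aᵢ, A') + dF(A with Aᵢ := A')`.
For any other index `k`, both `Aᵢ` and `A'` occur in the configuration with `Aₖ := A'`, so
`d(Aᵢ, A') ≤ d(Aᵢ, Bₖ) + d(A', Bₖ) ≤ dF(A with Aₖ := A')`. The remaining summands are nonnegative.
With at most one point, `dF A = 0`.
-/

open Function Finset

namespace FermatDistance

variable {Ω ι : Type*} [Fintype ι]

lemma sum_le_dist_add_sum_update [DecidableEq ι] (d : Ω → Ω → ℝ) (htri : ∀ A B C, d A C ≤ d A B + d B C)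
    (A : ι → Ω) (A' B : Ω) (i : ι) :
    ∑ j, d (A j) B ≤ d (A i) A' + ∑ j, d (update A i A' j) B := by
  have hrest : ∑ j ∈ univ.erase i, d (update A i A' j) B = ∑ j ∈ univ.erase i, d (A j) B :=
    sum_congr rfl fun j hj => by rw [update_of_ne (ne_of_mem_erase hj)]
  rw [← add_sum_erase _ _ (mem_univ i), ← add_sum_erase _ _ (mem_univ i), hrest, update_self]
  linarith [htri (A i) A' B]

lemma dist_le_sum_update_of_ne [DecidableEq ι] (d : Ω → Ω → ℝ) (hnonneg : ∀ A B, 0 ≤ d A B)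
    (hsymm : ∀ A B, d A B = d B A) (htri : ∀ A B C, d A C ≤ d A B + d B C)
    (A : ι → Ω) (A' B : Ω) {i k : ι} (hik : i ≠ k) :
    d (A i) A' ≤ ∑ j, d (update A k A' j) B := by
  have hpair : d (A i) B + d A' B ≤ ∑ j, d (update A k A' j) B := by
    have := sum_le_sum_of_subset_of_nonneg (subset_univ {i, k})
      fun j _ _ => hnonneg (update A k A' j) B
    rwa [sum_pair hik, update_of_ne hik, update_self] at this
  linarith [htri (A i) B A', hsymm A' B]

section IsLeast

variable (d : Ω → Ω → ℝ) (dF : (ι → Ω) → ℝ)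

lemma fermat_nonneg (hnonneg : ∀ A B, 0 ≤ d A B)
    (hdF : ∀ A : ι → Ω, IsLeast {x : ℝ | ∃ B : Ω, x = ∑ i, d (A i) B} (dF A)) (A : ι → Ω) :
    0 ≤ dF A := by
  obtain ⟨B, hB⟩ := (hdF A).1
  exact hB ▸ sum_nonneg fun i _ => hnonneg (A i) B

lemma fermat_nonpos_of_subsingleton [Subsingleton ι] (hself : ∀ A, d A A = 0)
    (hdF : ∀ A : ι → Ω, IsLeast {x : ℝ | ∃ B : Ω, x = ∑ i, d (A i) B} (dF A)) (A : ι → Ω) :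
    dF A ≤ 0 := by
  cases isEmpty_or_nonempty ι with
  | inl _ =>
    obtain ⟨B, hB⟩ := (hdF A).1
    simp [hB]
  | inr hι =>
    obtain ⟨i⟩ := hι
    refine (hdF A).2 ⟨A i, ?_⟩
    simp [Subsingleton.elim _ i, hself]

lemma fermat_le_dist_add_fermat_update [DecidableEq ι] (htri : ∀ A B C, d A C ≤ d A B + d B C)
    (hdF : ∀ A : ι → Ω, IsLeast {x : ℝ | ∃ B : Ω, x = ∑ i, d (A i) B} (dF A))
    (A : ι → Ω) (A' : Ω) (i : ι) :
    dF A ≤ d (A i) A' + dF (update A i A') := by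
  obtain ⟨B, hB⟩ := (hdF (update A i A')).1
  rw [hB]
  exact ((hdF A).2 ⟨B, rfl⟩).trans (sum_le_dist_add_sum_update d htri A A' B i)

lemma dist_le_fermat_update_of_ne [DecidableEq ι] (hnonneg : ∀ A B, 0 ≤ d A B)
    (hsymm : ∀ A B, d A B = d B A) (htri : ∀ A B C, d A C ≤ d A B + d B C)
    (hdF : ∀ A : ι → Ω, IsLeast {x : ℝ | ∃ B : Ω, x = ∑ i, d (A i) B} (dF A))
    (A : ι → Ω) (A' : Ω) {i k : ι} (hik : i ≠ k) :
    d (A i) A' ≤ dF (update A k A') := by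
  obtain ⟨B, hB⟩ := (hdF (update A k A')).1
  exact hB ▸ dist_le_sum_update_of_ne d hnonneg hsymm htri A A' B hik

end IsLeast

end FermatDistance

open FermatDistance in
/-- If `d` is a pseudometric on `Ω` and `dF` is the (attained) Fermat distance
`dF A = min_{B ∈ Ω} ∑ i, d (A i) B`, then `dF` satisfies the generalized triangle
inequality. -/
theorem fermat_generalized_triangle {Ω : Type*} (d : Ω → Ω → ℝ)
    (hnonneg : ∀ A B, 0 ≤ d A B)
    (hself : ∀ A, d A A = 0)
    (hsymm : ∀ A B, d A B = d B A)
    (htri : ∀ A B C, d A C ≤ d A B + d B C)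
    (n : ℕ) (dF : (Fin n → Ω) → ℝ)
    (hdF : ∀ A : Fin n → Ω, IsLeast {x : ℝ | ∃ B : Ω, x = ∑ i, d (A i) B} (dF A))
    (A : Fin n → Ω) (A' : Ω) :
    dF A ≤ ∑ i : Fin n, dF (Function.update A i A') := by
  have hterms_nonneg (i : Fin n) : 0 ≤ dF (update A i A') := fermat_nonneg d dF hnonneg hdF _
  cases subsingleton_or_nontrivial (Fin n) with
  | inl _ =>
    exact (fermat_nonpos_of_subsingleton d dF hself hdF A).trans
      (sum_nonneg fun i _ => hterms_nonneg i)
  | inr _ =>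
    obtain ⟨i, k, hik⟩ := exists_pair_ne (Fin n)
    have hpair : dF (update A i A') + dF (update A k A') ≤ ∑ j, dF (update A j A') := by
      have := sum_le_sum_of_subset_of_nonneg (subset_univ {i, k}) fun j _ _ => hterms_nonneg j
      rwa [sum_pair hik] at this
    linarith [fermat_le_dist_add_fermat_update d dF htri hdF A A' i,
      dist_le_fermat_update_of_ne d dF hnonneg hsymm htri hdF A A' hik]
end

section
/- If d is a pseudometric on Ω, then the Fermat distance d_F(A_1,...,A_n) = min_{B∈Ω} Σ_i d(A_i,B) is a pseudo n-metric: it is non-negative, symmetric under any permutation of its arguments, satisfies d_F(A,...,A)=0, and satisfies the generalized triangle inequality d_F(A_{1:n}) ≤ Σ_{i=1}^n d_F(A^i_{1:n,n+1}). -/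
/-!
Fix `i` and let `B` be a Fermat point of `update A i A'`. Using `B` as a candidate for `A`,
the triangle inequality `d (A i) B ≤ d (A i) A' + d A' B` gives
`dF A ≤ dF (update A i A') + d (A i) A'`.
For any `k ≠ i` the tuple `update A k A'` contains both `A i` and `A'`, so the triangle inequality
through one of its Fermat points gives `d (A i) A' ≤ dF (update A k A')`. The other terms of the
sum are non-negative, and with fewer than two points the Fermat distance vanishes.
-/

open Finset Function

namespace Fermat

variable {ι Ω : Type*} [Fintype ι] (d : Ω → Ω → ℝ)

def costs (A : ι → Ω) : Set ℝ := {x : ℝ | ∃ B : Ω, x = ∑ i, d (A i) B}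

variable {d}

theorem nonneg_of_isLeast (hnonneg : ∀ A B, 0 ≤ d A B) {A : ι → Ω} {m : ℝ}
    (h : IsLeast (costs d A) m) : 0 ≤ m := by
  obtain ⟨B, rfl⟩ := h.1
  exact sum_nonneg fun i _ => hnonneg _ _

theorem costs_comp_equiv (A : ι → Ω) (σ : Equiv.Perm ι) : costs d (A ∘ σ) = costs d A := by
  ext x
  exact exists_congr fun B => by rw [comp_def, Equiv.sum_comp σ fun i => d (A i) B]

theorem eq_zero_of_isLeast_const (hnonneg : ∀ A B, 0 ≤ d A B) (hself : ∀ A, d A A = 0)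
    {A : Ω} {m : ℝ} (h : IsLeast (costs d fun _ : ι => A) m) : m = 0 :=
  le_antisymm (h.2 ⟨A, by simp [hself]⟩) (nonneg_of_isLeast hnonneg h)

theorem nonpos_of_isLeast_of_subsingleton [Subsingleton ι] (hself : ∀ A, d A A = 0)
    {A : ι → Ω} {m : ℝ} (h : IsLeast (costs d A) m) : m ≤ 0 := by
  cases isEmpty_or_nonempty ι with
  | inl _ =>
    obtain ⟨B, rfl⟩ := h.1
    simp
  | inr hι =>
    obtain ⟨i₀⟩ := hι
    calc m ≤ ∑ i, d (A i) (A i₀) := h.2 ⟨A i₀, rfl⟩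
      _ = 0 := sum_eq_zero fun i _ => by rw [Subsingleton.elim i i₀, hself]

variable [DecidableEq ι]

theorem sum_comp_update (g : Ω → ℝ) (A : ι → Ω) (A' : Ω) (i : ι) :
    ∑ l, g (update A i A' l) = g A' + ∑ l ∈ univ \ {i}, g (A l) := by
  simp only [apply_update (fun _ => g)]
  exact sum_update_of_mem (mem_univ i) _ _

theorem le_add_dist_of_isLeast_update (htri : ∀ A B C, d A C ≤ d A B + d B C)
    {A : ι → Ω} {A' : Ω} {i : ι} {m m' : ℝ} (h : IsLeast (costs d A) m)
    (h' : IsLeast (costs d (update A i A')) m') : m ≤ m' + d (A i) A' := by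
  obtain ⟨B, rfl⟩ := h'.1
  have hA : ∑ l, d (A l) B = d (A i) B + ∑ l ∈ univ \ {i}, d (A l) B :=
    sum_eq_add_sum_sdiff_singleton_of_mem (mem_univ i) _
  linarith [h.2 ⟨B, rfl⟩, sum_comp_update (d · B) A A' i, htri (A i) A' B]

theorem dist_le_of_isLeast_update (hnonneg : ∀ A B, 0 ≤ d A B)
    (hsymm : ∀ A B, d A B = d B A) (htri : ∀ A B C, d A C ≤ d A B + d B C)
    {A : ι → Ω} {A' : Ω} {i k : ι} (hik : i ≠ k) {m : ℝ}
    (h : IsLeast (costs d (update A k A')) m) : d (A i) A' ≤ m := by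
  obtain ⟨B, rfl⟩ := h.1
  have hi : d (A i) B ≤ ∑ l ∈ univ \ {k}, d (A l) B :=
    single_le_sum (f := fun l => d (A l) B) (fun l _ => hnonneg _ _) (by simpa using hik)
  linarith [sum_comp_update (d · B) A A' k, htri (A i) B A', hsymm B A']

theorem le_sum_update_of_isLeast (hnonneg : ∀ A B, 0 ≤ d A B) (hself : ∀ A, d A A = 0)
    (hsymm : ∀ A B, d A B = d B A) (htri : ∀ A B C, d A C ≤ d A B + d B C)
    {dF : (ι → Ω) → ℝ} (hdF : ∀ A, IsLeast (costs d A) (dF A)) (A : ι → Ω) (A' : Ω) :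
    dF A ≤ ∑ i, dF (update A i A') := by
  have hterms : ∀ i, 0 ≤ dF (update A i A') := fun i => nonneg_of_isLeast hnonneg (hdF _)
  cases subsingleton_or_nontrivial ι with
  | inl _ =>
    exact (nonpos_of_isLeast_of_subsingleton hself (hdF A)).trans (sum_nonneg fun i _ => hterms i)
  | inr _ =>
    obtain ⟨i, k, hik⟩ := exists_pair_ne ι
    calc dF A ≤ dF (update A i A') + d (A i) A' :=
          le_add_dist_of_isLeast_update htri (hdF A) (hdF _)
      _ ≤ dF (update A i A') + dF (update A k A') :=
        add_le_add_right (dist_le_of_isLeast_update hnonneg hsymm htri hik (hdF _)) _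
      _ = ∑ j ∈ {i, k}, dF (update A j A') :=
        (sum_pair (f := fun j => dF (update A j A')) hik).symm
      _ ≤ ∑ j, dF (update A j A') :=
        sum_le_sum_of_subset_of_nonneg (subset_univ _) fun j _ _ => hterms j

end Fermat

/-- If `d` is a pseudometric on `Ω`, then the (attained) Fermat distance
`dF A = min_{B ∈ Ω} ∑ i, d (A i) B` is a pseudo `n`-metric: non-negative,
permutation symmetric, `dF (A,...,A) = 0`, and the generalized triangle inequality. -/
theorem fermat_is_pseudo_n_metric {Ω : Type*} (d : Ω → Ω → ℝ)
    (hnonneg : ∀ A B, 0 ≤ d A B)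
    (hself : ∀ A, d A A = 0)
    (hsymm : ∀ A B, d A B = d B A)
    (htri : ∀ A B C, d A C ≤ d A B + d B C)
    (n : ℕ) (dF : (Fin n → Ω) → ℝ)
    (hdF : ∀ A : Fin n → Ω, IsLeast {x : ℝ | ∃ B : Ω, x = ∑ i, d (A i) B} (dF A)) :
    (∀ A : Fin n → Ω, 0 ≤ dF A) ∧
    (∀ (A : Fin n → Ω) (σ : Equiv.Perm (Fin n)), dF (A ∘ σ) = dF A) ∧
    (∀ A : Ω, dF (fun _ => A) = 0) ∧
    (∀ (A : Fin n → Ω) (A' : Ω),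
      dF A ≤ ∑ i : Fin n, dF (Function.update A i A')) := by
  change ∀ A, IsLeast (Fermat.costs d A) (dF A) at hdF
  refine ⟨fun A => Fermat.nonneg_of_isLeast hnonneg (hdF A), fun A σ => ?_,
    fun A => Fermat.eq_zero_of_isLeast_const hnonneg hself (hdF _),
    Fermat.le_sum_update_of_isLeast hnonneg hself hsymm htri hdF⟩
  exact (hdF (A ∘ σ)).unique (Fermat.costs_comp_equiv A σ ▸ hdF A)
end

section
/- Let A and B be m×m Hermitian matrices with eigenvalues a₁ ≤ ... ≤ a_m and b₁ ≤ ... ≤ b_m respectively. Then the Frobenius norm satisfies ⦀A − B⦀_F ≥ sqrt(Σ_{i=1}^m (a_i − b_i)²). -/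
open Matrix Finset

/-!
Diagonalize `A = U diag(α) Uᴴ` and `B = V diag(β) Vᴴ` with unitary `U`, `V`. The Frobenius norm is
unitarily invariant, so with `W = Uᴴ V` we get
`‖A - B‖_F² = ‖diag(α) W - W diag(β)‖_F² = ∑ᵢⱼ |Wᵢⱼ|² (αᵢ - βⱼ)²`.
Since `W` is unitary, `(|Wᵢⱼ|²)` is doubly stochastic, and by Birkhoff's theorem this linear
function of it is bounded below by its value `∑ᵢ (αᵢ - β_{π i})²` at some permutation matrix.
Finally, by the rearrangement inequality no permutation beats pairing the sorted eigenvalues.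
-/

section Rearrangement

variable {ι R : Type*} [Fintype ι] [CommRing R] [LinearOrder R] [IsStrictOrderedRing R]

theorem Monovary.sum_sub_sq_le_sum_sub_comp_perm_sq {f g : ι → R} (hfg : Monovary f g)
    (σ : Equiv.Perm ι) : ∑ i, (f i - g i) ^ 2 ≤ ∑ i, (f i - g (σ i)) ^ 2 := by
  have expand (h : ι → R) : ∑ i, (f i - h i) ^ 2
      = ∑ i, f i ^ 2 + ∑ i, h i ^ 2 - 2 * ∑ i, f i * h i := by
    simp only [sub_sq, sum_add_distrib, sum_sub_distrib, mul_sum, mul_assoc]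
    ring
  rw [expand, expand, Equiv.sum_comp σ (fun i => g i ^ 2)]
  linarith [hfg.sum_mul_comp_perm_le_sum_mul (σ := σ)]

end Rearrangement

section Birkhoff

variable {n R : Type*} [Fintype n] [DecidableEq n] [Field R] [LinearOrder R]
  [IsStrictOrderedRing R]

theorem exists_perm_sum_le_sum_mul_of_mem_doublyStochastic {M : Matrix n n R}
    (hM : M ∈ doublyStochastic R n) (c : n → n → R) :
    ∃ σ : Equiv.Perm n, ∑ i, c i (σ i) ≤ ∑ i, ∑ j, M i j * c i j := by
  let pairing : Matrix n n R →ₗ[R] R := ∑ i, ∑ j, c i j • entryLinearMap R R i j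
  have pairing_apply (N : Matrix n n R) : pairing N = ∑ i, ∑ j, N i j * c i j := by
    simp [pairing, LinearMap.sum_apply, mul_comm]
  rw [← SetLike.mem_coe, doublyStochastic_eq_convexHull_permMatrix] at hM
  obtain ⟨_, ⟨σ, rfl⟩, hσ⟩ :=
    (pairing.concaveOn convex_univ).exists_le_of_mem_convexHull (Set.subset_univ _) hM
  refine ⟨σ, ?_⟩
  rw [pairing_apply, pairing_apply] at hσ
  simpa [Equiv.Perm.permMatrix, PEquiv.toMatrix_apply, eq_comm] using hσ

end Birkhoff

section Unitary

variable {𝕜 m n : Type*} [RCLike 𝕜] [Fintype n]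

theorem mul_conjTranspose_self_apply_self (M : Matrix m n 𝕜) (i : m) :
    (M * Mᴴ) i i = ((∑ j, ‖M i j‖ ^ 2 : ℝ) : 𝕜) := by
  simp [mul_apply, RCLike.mul_conj]

variable [Fintype m]

theorem trace_mul_conjTranspose_self (M : Matrix m n 𝕜) :
    (M * Mᴴ).trace = ((∑ i, ∑ j, ‖M i j‖ ^ 2 : ℝ) : 𝕜) := by
  simp [trace, mul_conjTranspose_self_apply_self]

variable [DecidableEq m] [DecidableEq n]

theorem sum_norm_sq_unitary_mul_mul_unitary {U : Matrix m m 𝕜} {V : Matrix n n 𝕜}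
    (hU : U ∈ unitaryGroup m 𝕜) (hV : V ∈ unitaryGroup n 𝕜) (M : Matrix m n 𝕜) :
    ∑ i, ∑ j, ‖(U * M * V) i j‖ ^ 2 = ∑ i, ∑ j, ‖M i j‖ ^ 2 := by
  apply RCLike.ofReal_injective (K := 𝕜)
  rw [← trace_mul_conjTranspose_self, ← trace_mul_conjTranspose_self]
  have hV' : V * Vᴴ = 1 := Unitary.mul_star_self_of_mem hV
  have hU' : Uᴴ * U = 1 := Unitary.star_mul_self_of_mem hU
  calc (U * M * V * (U * M * V)ᴴ).trace = (U * (M * (V * Vᴴ) * Mᴴ) * Uᴴ).trace := by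
        simp only [conjTranspose_mul, Matrix.mul_assoc]
    _ = (Uᴴ * U * (M * Mᴴ)).trace := by
        rw [trace_mul_comm, ← Matrix.mul_assoc, hV', Matrix.mul_one]
    _ = _ := by rw [hU', Matrix.one_mul]

theorem of_norm_sq_mem_doublyStochastic_of_mem_unitaryGroup {U : Matrix n n 𝕜}
    (hU : U ∈ unitaryGroup n 𝕜) :
    (of fun i j => ‖U i j‖ ^ 2) ∈ doublyStochastic ℝ n := by
  have row_sum (W : Matrix n n 𝕜) (hW : W ∈ unitaryGroup n 𝕜) (i : n) :
      ∑ j, ‖W i j‖ ^ 2 = 1 := by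
    have := mul_conjTranspose_self_apply_self W i
    rw [show W * Wᴴ = 1 from Unitary.mul_star_self_of_mem hW, one_apply_eq] at this
    exact_mod_cast this.symm
  refine mem_doublyStochastic_iff_sum.2 ⟨fun i j => sq_nonneg ‖U i j‖, row_sum U hU, fun j => ?_⟩
  simpa using row_sum Uᴴ (Unitary.star_mem hU) j

theorem sum_norm_sq_sub_eq_of_conj_eq_diagonal {U V A B : Matrix n n 𝕜}
    (hU : U ∈ unitaryGroup n 𝕜) (hV : V ∈ unitaryGroup n 𝕜) {α β : n → ℝ}
    (hA : Uᴴ * A * U = diagonal (RCLike.ofReal ∘ α))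
    (hB : Vᴴ * B * V = diagonal (RCLike.ofReal ∘ β)) :
    ∑ i, ∑ j, ‖(A - B) i j‖ ^ 2 = ∑ i, ∑ j, ‖(Uᴴ * V) i j‖ ^ 2 * (α i - β j) ^ 2 := by
  have conj : Uᴴ * (A - B) * V =
      diagonal (RCLike.ofReal ∘ α) * (Uᴴ * V) - (Uᴴ * V) * diagonal (RCLike.ofReal ∘ β) := by
    rw [← hA, ← hB]
    calc Uᴴ * (A - B) * V = Uᴴ * A * (U * Uᴴ) * V - Uᴴ * (V * Vᴴ) * B * V := by
          rw [show U * Uᴴ = 1 from Unitary.mul_star_self_of_mem hU,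
            show V * Vᴴ = 1 from Unitary.mul_star_self_of_mem hV,
            Matrix.mul_sub, Matrix.sub_mul, Matrix.mul_one, Matrix.mul_one]
      _ = _ := by simp only [Matrix.mul_assoc]
  rw [← sum_norm_sq_unitary_mul_mul_unitary (Unitary.star_mem hU) hV, star_eq_conjTranspose,
    conj]
  refine sum_congr rfl fun i _ => sum_congr rfl fun j _ => ?_
  rw [Matrix.sub_apply, diagonal_mul, mul_diagonal, Function.comp_apply, Function.comp_apply,
    mul_comm _ ((Uᴴ * V) i j), ← mul_sub, ← RCLike.ofReal_sub, norm_mul, RCLike.norm_ofReal,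
    mul_pow, sq_abs]

end Unitary

namespace Matrix.IsHermitian

variable {𝕜 n : Type*} [RCLike 𝕜] [Fintype n] [DecidableEq n] {A B : Matrix n n 𝕜}

theorem star_eigenvectorUnitary_mul_mul_eigenvectorUnitary (hA : A.IsHermitian) :
    (hA.eigenvectorUnitary : Matrix n n 𝕜)ᴴ * A * (hA.eigenvectorUnitary : Matrix n n 𝕜) =
      diagonal (RCLike.ofReal ∘ hA.eigenvalues) := by
  rw [← hA.conjStarAlgAut_star_eigenvectorUnitary, Unitary.conjStarAlgAut_star_apply]
  rfl

theorem exists_perm_sum_sq_sub_eigenvalues_le (hA : A.IsHermitian) (hB : B.IsHermitian) :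
    ∃ π : Equiv.Perm n, ∑ i, (hA.eigenvalues i - hB.eigenvalues (π i)) ^ 2 ≤
      ∑ i, ∑ j, ‖(A - B) i j‖ ^ 2 := by
  have hU := hA.eigenvectorUnitary.2
  have hV := hB.eigenvectorUnitary.2
  rw [sum_norm_sq_sub_eq_of_conj_eq_diagonal hU hV
    hA.star_eigenvectorUnitary_mul_mul_eigenvectorUnitary
    hB.star_eigenvectorUnitary_mul_mul_eigenvectorUnitary]
  exact exists_perm_sum_le_sum_mul_of_mem_doublyStochastic
    (of_norm_sq_mem_doublyStochastic_of_mem_unitaryGroup (mul_mem (Unitary.star_mem hU) hV))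
    fun i j => (hA.eigenvalues i - hB.eigenvalues j) ^ 2

end Matrix.IsHermitian

/-- Hoffman–Wielandt inequality: for Hermitian matrices `A`, `B` with sorted
eigenvalue sequences `a`, `b`, the Frobenius norm of `A - B` is at least
`sqrt (∑ (a i - b i)²)`. -/
theorem hoffman_wielandt {m : ℕ} (A B : Matrix (Fin m) (Fin m) ℂ)
    (hA : A.IsHermitian) (hB : B.IsHermitian)
    (a b : Fin m → ℝ) (ha_mono : Monotone a) (hb_mono : Monotone b)
    (ha : ∃ σ : Equiv.Perm (Fin m), ∀ i, a i = hA.eigenvalues (σ i))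
    (hb : ∃ σ : Equiv.Perm (Fin m), ∀ i, b i = hB.eigenvalues (σ i)) :
    Real.sqrt (∑ i, (a i - b i) ^ 2) ≤
      Real.sqrt (∑ i, ∑ j, ‖(A - B) i j‖ ^ 2) := by
  obtain ⟨σ, rfl⟩ : ∃ σ : Equiv.Perm (Fin m), a = hA.eigenvalues ∘ σ :=
    ha.imp fun _ h => funext h
  obtain ⟨τ, rfl⟩ : ∃ τ : Equiv.Perm (Fin m), b = hB.eigenvalues ∘ τ :=
    hb.imp fun _ h => funext h
  obtain ⟨π, hπ⟩ := hA.exists_perm_sum_sq_sub_eigenvalues_le hB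
  refine Real.sqrt_le_sqrt (le_trans ?_ hπ)
  calc ∑ i, (hA.eigenvalues (σ i) - hB.eigenvalues (τ i)) ^ 2
      ≤ ∑ i, (hA.eigenvalues (σ i) - hB.eigenvalues (τ (τ.symm (π (σ i))))) ^ 2 :=
        (ha_mono.monovary hb_mono).sum_sub_sq_le_sum_sub_comp_perm_sq (σ.trans (π.trans τ.symm))
    _ = ∑ i, (hA.eigenvalues i - hB.eigenvalues (π i)) ^ 2 := by
        simp only [Equiv.apply_symm_apply]
        exact Equiv.sum_comp σ fun i => (hA.eigenvalues i - hB.eigenvalues (π i)) ^ 2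
end

section
/- Let A and B be m×m Hermitian matrices with eigenvalues a₁ ≤ ... ≤ a_m and b₁ ≤ ... ≤ b_m respectively. Then the operator 2-norm satisfies ⦀A − B⦀₂ ≥ max_{i∈[m]} |a_i − b_i|. -/
/-!
Fix `i` (indices start at `0`). The eigenvectors of `A` belonging to `a i, …, a (m-1)` span a
subspace of dimension `m - i` on which `re ⟪A x, x⟫ ≥ a i ‖x‖²`, and those of `B` belonging to
`b 0, …, b i` span a subspace of dimension `i + 1` on which `re ⟪B x, x⟫ ≤ b i ‖x‖²`. The dimensions
add up to more than `m`, so some `x ≠ 0` lies in both, and then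
`(a i - b i) ‖x‖² ≤ re ⟪(A - B) x, x⟫ ≤ ‖A - B‖ ‖x‖²`. Exchanging `A` and `B` gives the other sign.
-/

open Matrix
open scoped Matrix.Norms.L2Operator
open Module Submodule RCLike

namespace OrthonormalBasis

variable {𝕜 E ι : Type*} [RCLike 𝕜] [NormedAddCommGroup E] [InnerProductSpace 𝕜 E] [Fintype ι]
  (v : OrthonormalBasis ι 𝕜 E) {T : E →ₗ[𝕜] E} {μ : ι → ℝ}

local notation "⟪" x ", " y "⟫" => @inner 𝕜 _ _ x y

lemma re_inner_map_self_eq_sum (hT : ∀ k, T (v k) = (μ k : 𝕜) • v k) (x : E) :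
    re ⟪T x, x⟫ = ∑ k, μ k * ‖⟪v k, x⟫‖ ^ 2 := by
  have hTx : T x = ∑ k, (μ k * ⟪v k, x⟫) • v k := by
    conv_lhs => rw [← v.sum_repr' x]
    simp only [map_sum, map_smul, hT, smul_smul, mul_comm]
  rw [hTx, sum_inner, map_sum]
  refine Finset.sum_congr rfl fun k _ => ?_
  rw [inner_smul_left, map_mul (starRingEnd 𝕜), conj_ofReal, mul_assoc, RCLike.conj_mul]
  norm_cast

lemma inner_eq_zero_of_mem_span_image {S : Set ι} {x : E} (hx : x ∈ span 𝕜 (v '' S)) {k : ι}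
    (hk : k ∉ S) : ⟪v k, x⟫ = 0 := by
  rw [← v.coe_toBasis, v.toBasis.mem_span_image] at hx
  simpa [v.coe_toBasis_repr_apply, v.repr_apply_apply] using fun h => hk (hx h)

lemma mul_norm_sq_le_re_inner_map_self (hT : ∀ k, T (v k) = (μ k : 𝕜) • v k) {S : Set ι}
    {c : ℝ} (hc : ∀ k ∈ S, c ≤ μ k) {x : E} (hx : x ∈ span 𝕜 (v '' S)) :
    c * ‖x‖ ^ 2 ≤ re ⟪T x, x⟫ := by
  rw [v.re_inner_map_self_eq_sum hT, ← v.sum_sq_norm_inner_right, Finset.mul_sum]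
  refine Finset.sum_le_sum fun k _ => ?_
  by_cases hk : k ∈ S
  · exact mul_le_mul_of_nonneg_right (hc k hk) (sq_nonneg _)
  · simp [v.inner_eq_zero_of_mem_span_image hx hk]

lemma re_inner_map_self_le_mul_norm_sq (hT : ∀ k, T (v k) = (μ k : 𝕜) • v k) {S : Set ι}
    {c : ℝ} (hc : ∀ k ∈ S, μ k ≤ c) {x : E} (hx : x ∈ span 𝕜 (v '' S)) :
    re ⟪T x, x⟫ ≤ c * ‖x‖ ^ 2 := by
  have hnegT : ∀ k, (-T) (v k) = ((-μ k : ℝ) : 𝕜) • v k := fun k => by simp [hT]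
  simpa using v.mul_norm_sq_le_re_inner_map_self hnegT (c := -c)
    (fun k hk => neg_le_neg (hc k hk)) hx

lemma finrank_span_image (S : Finset ι) : finrank 𝕜 (span 𝕜 (v '' S)) = S.card := by
  classical
  have hv := v.orthonormal.linearIndependent
  rw [← Finset.coe_image, finrank_span_finset_eq_card,
    Finset.card_image_of_injective _ hv.injective]
  simpa using (hv.linearIndepOn S).id_image

end OrthonormalBasis

lemma Submodule.exists_ne_zero_mem_inf_of_finrank_lt {K V : Type*} [DivisionRing K]
    [AddCommGroup V] [Module K V] [FiniteDimensional K V]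
    {s t : Submodule K V} (h : finrank K V < finrank K s + finrank K t) :
    ∃ x ∈ s, x ∈ t ∧ x ≠ 0 := by
  contrapose! h
  exact finrank_add_finrank_le_of_disjoint (disjoint_def.mpr h)

lemma ContinuousLinearMap.re_inner_map_self_le {𝕜 E : Type*} [RCLike 𝕜] [NormedAddCommGroup E]
    [InnerProductSpace 𝕜 E] (T : E →L[𝕜] E) (x : E) : re (inner 𝕜 (T x) x) ≤ ‖T‖ * ‖x‖ ^ 2 :=
  calc re (inner 𝕜 (T x) x) ≤ ‖T x‖ * ‖x‖ := re_inner_le_norm _ _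
    _ ≤ ‖T‖ * ‖x‖ * ‖x‖ := by gcongr; exact T.le_opNorm x
    _ = ‖T‖ * ‖x‖ ^ 2 := by ring

namespace Matrix.IsHermitian

variable {𝕜 : Type*} [RCLike 𝕜]

lemma toEuclideanCLM_eigenvectorBasis {n : Type*} [Fintype n] [DecidableEq n]
    {A : Matrix n n 𝕜} (hA : A.IsHermitian) (j : n) :
    toEuclideanCLM (𝕜 := 𝕜) A (hA.eigenvectorBasis j) =
      (hA.eigenvalues j : 𝕜) • hA.eigenvectorBasis j := by
  ext k
  rw [ofLp_toEuclideanCLM, congrFun (hA.mulVec_eigenvectorBasis j) k, PiLp.smul_apply,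
    RCLike.real_smul_eq_coe_smul (K := 𝕜)]
  rfl

theorem sub_le_norm_sub_of_sorted_eigenvalues {m : ℕ} {A B : Matrix (Fin m) (Fin m) 𝕜}
    (hA : A.IsHermitian) (hB : B.IsHermitian) {a b : Fin m → ℝ} (ha_mono : Monotone a)
    (hb_mono : Monotone b) {σ τ : Equiv.Perm (Fin m)} (ha : ∀ i, a i = hA.eigenvalues (σ i))
    (hb : ∀ i, b i = hB.eigenvalues (τ i)) (i : Fin m) :
    a i - b i ≤ ‖A - B‖ := by
  set vA := hA.eigenvectorBasis
  set vB := hB.eigenvectorBasis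
  set SA := (Finset.Ici i).image σ
  set SB := (Finset.Iic i).image τ
  have hdim : finrank 𝕜 (EuclideanSpace 𝕜 (Fin m)) <
      finrank 𝕜 (span 𝕜 (vA '' SA)) + finrank 𝕜 (span 𝕜 (vB '' SB)) := by
    rw [finrank_euclideanSpace_fin, vA.finrank_span_image, vB.finrank_span_image,
      Finset.card_image_of_injective _ σ.injective, Finset.card_image_of_injective _ τ.injective,
      Fin.card_Ici, Fin.card_Iic]
    omega
  obtain ⟨x, hxA, hxB, hx⟩ := exists_ne_zero_mem_inf_of_finrank_lt hdim
  have hSA : ∀ k ∈ SA, a i ≤ hA.eigenvalues k := by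
    simp only [SA, Finset.forall_mem_image, Finset.mem_Ici, ← ha]
    exact fun j hj => ha_mono hj
  have hSB : ∀ k ∈ SB, hB.eigenvalues k ≤ b i := by
    simp only [SB, Finset.forall_mem_image, Finset.mem_Iic, ← hb]
    exact fun j hj => hb_mono hj
  have hA_lower : a i * ‖x‖ ^ 2 ≤ re (inner 𝕜 (toEuclideanCLM (𝕜 := 𝕜) A x) x) := by
    simpa only [ContinuousLinearMap.coe_coe] using
      vA.mul_norm_sq_le_re_inner_map_self hA.toEuclideanCLM_eigenvectorBasis hSA hxA
  have hB_upper : re (inner 𝕜 (toEuclideanCLM (𝕜 := 𝕜) B x) x) ≤ b i * ‖x‖ ^ 2 := by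
    simpa only [ContinuousLinearMap.coe_coe] using
      vB.re_inner_map_self_le_mul_norm_sq hB.toEuclideanCLM_eigenvectorBasis hSB hxB
  have hkey : (a i - b i) * ‖x‖ ^ 2 ≤ ‖A - B‖ * ‖x‖ ^ 2 :=
    calc (a i - b i) * ‖x‖ ^ 2
        ≤ re (inner 𝕜 (toEuclideanCLM (𝕜 := 𝕜) A x) x)
          - re (inner 𝕜 (toEuclideanCLM (𝕜 := 𝕜) B x) x) := by
          linarith
      _ = re (inner 𝕜 (toEuclideanCLM (𝕜 := 𝕜) (A - B) x) x) := by
          rw [map_sub, _root_.sub_apply, inner_sub_left, map_sub]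
      _ ≤ ‖A - B‖ * ‖x‖ ^ 2 := (toEuclideanCLM (𝕜 := 𝕜) (A - B)).re_inner_map_self_le x
  exact le_of_mul_le_mul_right hkey (by positivity)

end Matrix.IsHermitian

/-- Weyl's perturbation inequality: for Hermitian matrices `A`, `B` with sorted
eigenvalue sequences `a`, `b`, the operator 2-norm of `A - B` is at least
`max_i |a i - b i|`. -/
theorem weyl_perturbation {m : ℕ} (A B : Matrix (Fin m) (Fin m) ℂ)
    (hA : A.IsHermitian) (hB : B.IsHermitian)
    (a b : Fin m → ℝ) (ha_mono : Monotone a) (hb_mono : Monotone b)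
    (ha : ∃ σ : Equiv.Perm (Fin m), ∀ i, a i = hA.eigenvalues (σ i))
    (hb : ∃ σ : Equiv.Perm (Fin m), ∀ i, b i = hB.eigenvalues (σ i)) :
    ∀ i : Fin m, |a i - b i| ≤ ‖A - B‖ := by
  intro i
  obtain ⟨σ, hσ⟩ := ha
  obtain ⟨τ, hτ⟩ := hb
  rw [abs_sub_le_iff]
  exact ⟨hA.sub_le_norm_sub_of_sorted_eigenvalues hB ha_mono hb_mono hσ hτ i,
    (hB.sub_le_norm_sub_of_sorted_eigenvalues hA hb_mono ha_mono hτ hσ i).trans_eq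
      (norm_sub_rev B A)⟩
end

section
/- Let A₁,...,A_n be real symmetric m×m matrices with sorted eigenvalue vectors Λ_{A_i} ∈ ℝ^m (increasing order). Let d_F(A_{1:n}) = min over C ∈ (real symmetric matrices) and orthogonal P₁,...,P_n of Σ_{i=1}^n ⦀A_i P_i − P_i C⦀_F. Then d_F(A_{1:n}) = min_{Λ_C ∈ ℝ^m} Σ_{i=1}^n ‖Λ_{A_i} − Λ_C‖₂, i.e., the Fermat distance reduces to the geometric median problem on eigenvalue spectra. -/
/-!
Orthogonal changes of basis preserve the Frobenius norm, so diagonalizing `A = U diag(λ) Uᵀ` and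
`C = V diag(μ) Vᵀ` turns `⦀AP − PC⦀_F²` into `⦀diag(λ) W − W diag(μ)⦀_F² = ∑ᵢⱼ (λᵢ − μⱼ)² Wᵢⱼ²` with
`W = UᵀPV` orthogonal. This is linear in the doubly stochastic matrix `(Wᵢⱼ²)`, so by Birkhoff's
theorem it is minimized at a permutation matrix, and by the rearrangement inequality the identity
permutation is best when `λ` and `μ` are both sorted (Hoffman–Wielandt). Thus at a minimizer
`(C, P)` each term of the Fermat sum dominates the corresponding term of the geometric-median sum
at the sorted spectrum of `C`. Conversely, for any `Λ_C`, the choice `C = diag(Λ_C)` with `Pᵢ` an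
eigenbasis of `Aᵢ` ordered by `Λ_{Aᵢ}` attains the geometric-median sum exactly.
-/

open Matrix Finset

section Frobenius

variable {ι κ ι' : Type*} [Fintype ι] [Fintype κ] [Fintype ι']

lemma sum_sq_apply_eq_trace (M : Matrix ι κ ℝ) : ∑ a, ∑ b, M a b ^ 2 = (Mᵀ * M).trace := by
  rw [Finset.sum_comm]
  simp [Matrix.trace, Matrix.mul_apply, sq]

lemma sum_sq_transpose_apply (M : Matrix ι κ ℝ) : ∑ a, ∑ b, Mᵀ a b ^ 2 = ∑ a, ∑ b, M a b ^ 2 :=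
  Finset.sum_comm

lemma sum_sq_mul_apply_of_transpose_mul_self_eq_one [DecidableEq ι] {P : Matrix ι' ι ℝ}
    (hP : Pᵀ * P = 1) (M : Matrix ι κ ℝ) :
    ∑ a, ∑ b, (P * M) a b ^ 2 = ∑ a, ∑ b, M a b ^ 2 := by
  rw [sum_sq_apply_eq_trace, sum_sq_apply_eq_trace, transpose_mul, Matrix.mul_assoc,
    ← Matrix.mul_assoc Pᵀ, hP, Matrix.one_mul]

lemma sum_sq_apply_mul_of_mul_transpose_eq_one [DecidableEq κ] {Q : Matrix κ ι' ℝ}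
    (hQ : Q * Qᵀ = 1) (M : Matrix ι κ ℝ) :
    ∑ a, ∑ b, (M * Q) a b ^ 2 = ∑ a, ∑ b, M a b ^ 2 := by
  rw [← sum_sq_transpose_apply, transpose_mul,
    sum_sq_mul_apply_of_transpose_mul_self_eq_one (by rwa [transpose_transpose]),
    sum_sq_transpose_apply]

end Frobenius

section Spectral

variable {ι : Type*} [Fintype ι]

lemma sum_sq_sub_le_sum_sq_sub_comp_perm [LinearOrder ι] {d e : ι → ℝ} (hd : Monotone d)
    (he : Monotone e) (σ : Equiv.Perm ι) :
    ∑ i, (d i - e i) ^ 2 ≤ ∑ i, (d i - e (σ i)) ^ 2 := by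
  have expand : ∀ g : ι → ℝ,
      ∑ i, (d i - g i) ^ 2 = ∑ i, d i ^ 2 + ∑ i, g i ^ 2 - 2 * ∑ i, d i * g i := by
    intro g
    simp only [sub_sq, sum_add_distrib, sum_sub_distrib, mul_sum, mul_assoc]
    ring
  have hsq : ∑ i, e (σ i) ^ 2 = ∑ i, e i ^ 2 := Equiv.sum_comp σ (e · ^ 2)
  have hre : ∑ i, d i * e (σ i) ≤ ∑ i, d i * e i :=
    (hd.monovary he).sum_mul_comp_perm_le_sum_mul
  have hσ := expand (e ∘ σ)
  simp only [Function.comp_apply] at hσ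
  linarith [expand e]

variable [DecidableEq ι]

lemma of_sq_mem_doublyStochastic {W : Matrix ι ι ℝ} (hW : Wᵀ * W = 1) :
    Matrix.of (fun i j => W i j ^ 2) ∈ doublyStochastic ℝ ι := by
  have hW' : W * Wᵀ = 1 := mul_eq_one_comm.mp hW
  refine mem_doublyStochastic_iff_sum.mpr ⟨fun i j => sq_nonneg _, fun i => ?_, fun j => ?_⟩
  · simpa [Matrix.mul_apply, sq] using congrFun (congrFun hW' i) i
  · simpa [Matrix.mul_apply, sq] using congrFun (congrFun hW j) j

lemma le_sum_mul_of_mem_doublyStochastic {f : ι → ι → ℝ} {c : ℝ}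
    (hf : ∀ σ : Equiv.Perm ι, c ≤ ∑ i, f i (σ i))
    {S : Matrix ι ι ℝ} (hS : S ∈ doublyStochastic ℝ ι) :
    c ≤ ∑ i, ∑ j, f i j * S i j := by
  have hlin : IsLinearMap ℝ fun T : Matrix ι ι ℝ => ∑ i, ∑ j, f i j * T i j := by
    refine ⟨fun x y => ?_, fun r x => ?_⟩
    · simp only [Matrix.add_apply, mul_add, sum_add_distrib]
    · simp only [Matrix.smul_apply, smul_eq_mul, mul_sum, mul_left_comm]
  rw [← SetLike.mem_coe, doublyStochastic_eq_convexHull_permMatrix] at hS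
  refine convexHull_min ?_ (convex_halfSpace_ge hlin c) hS
  rintro _ ⟨σ, rfl⟩
  simpa [Equiv.Perm.permMatrix, PEquiv.toMatrix_apply] using hf σ

lemma sum_sq_sub_le_sum_sq_diagonal_mul_sub_mul_diagonal [LinearOrder ι] {d e : ι → ℝ}
    (hd : Monotone d) (he : Monotone e) {W : Matrix ι ι ℝ} (hW : Wᵀ * W = 1) :
    ∑ i, (d i - e i) ^ 2 ≤ ∑ i, ∑ j, (diagonal d * W - W * diagonal e) i j ^ 2 := by
  have entry : ∀ i j,
      (diagonal d * W - W * diagonal e) i j ^ 2 = (d i - e j) ^ 2 * W i j ^ 2 := by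
    intro i j
    simp only [Matrix.sub_apply, diagonal_mul, mul_diagonal]
    ring
  simp only [entry]
  simpa using le_sum_mul_of_mem_doublyStochastic (sum_sq_sub_le_sum_sq_sub_comp_perm hd he)
    (of_sq_mem_doublyStochastic hW)

lemma Matrix.IsHermitian.exists_eq_mul_diagonal_mul_transpose {A : Matrix ι ι ℝ}
    (hA : A.IsHermitian) {d : ι → ℝ} (σ : Equiv.Perm ι) (hd : ∀ a, d a = hA.eigenvalues (σ a)) :
    ∃ U : Matrix ι ι ℝ, Uᵀ * U = 1 ∧ A = U * diagonal d * Uᵀ := by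
  set U₀ : Matrix ι ι ℝ := (hA.eigenvectorUnitary : Matrix ι ι ℝ)
  have hU₀ : U₀ᵀ * U₀ = 1 := by
    simpa [U₀, star_eq_conjTranspose] using mem_unitaryGroup_iff'.mp hA.eigenvectorUnitary.2
  have hA₀ : A = U₀ * diagonal hA.eigenvalues * U₀ᵀ := by
    simpa [U₀, Unitary.conjStarAlgAut_apply, star_eq_conjTranspose] using hA.spectral_theorem
  have hdσ : diagonal d = (diagonal hA.eigenvalues).submatrix σ σ := by
    rw [submatrix_diagonal_equiv]
    exact congrArg diagonal (funext hd)
  refine ⟨U₀.submatrix id σ, ?_, ?_⟩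
  · rw [transpose_submatrix, ← submatrix_mul _ _ _ _ _ Function.bijective_id, hU₀,
      submatrix_one_equiv]
  · rw [hdσ, transpose_submatrix, submatrix_mul_equiv, submatrix_mul_equiv, ← hA₀,
      submatrix_id_id]

theorem hoffman_wielandt_s12 [LinearOrder ι] {A C P U V : Matrix ι ι ℝ} {d e : ι → ℝ}
    (hU : Uᵀ * U = 1) (hV : Vᵀ * V = 1) (hA : A = U * diagonal d * Uᵀ)
    (hC : C = V * diagonal e * Vᵀ) (hd : Monotone d) (he : Monotone e) (hP : Pᵀ * P = 1) :
    ∑ i, (d i - e i) ^ 2 ≤ ∑ a, ∑ b, (A * P - P * C) a b ^ 2 := by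
  have hU' : U * Uᵀ = 1 := mul_eq_one_comm.mp hU
  have hV' : V * Vᵀ = 1 := mul_eq_one_comm.mp hV
  set W := Uᵀ * P * V
  have hW : Wᵀ * W = 1 := by
    simp only [W, transpose_mul, transpose_transpose, Matrix.mul_assoc]
    rw [← Matrix.mul_assoc U, hU', Matrix.one_mul, ← Matrix.mul_assoc Pᵀ, hP, Matrix.one_mul, hV]
  have hconj : A * P - P * C = U * (diagonal d * W - W * diagonal e) * Vᵀ := by
    rw [hA, hC]
    simp only [W, Matrix.mul_sub, Matrix.sub_mul, Matrix.mul_assoc]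
    rw [hV', Matrix.mul_one, ← Matrix.mul_assoc U Uᵀ, hU', Matrix.one_mul]
  rw [hconj, sum_sq_apply_mul_of_mul_transpose_eq_one (by rwa [transpose_transpose]),
    sum_sq_mul_apply_of_transpose_mul_self_eq_one hU]
  exact sum_sq_sub_le_sum_sq_diagonal_mul_sub_mul_diagonal hd he hW

lemma sum_sq_mul_sub_mul_diagonal_eq {A U : Matrix ι ι ℝ} {d : ι → ℝ} (hU : Uᵀ * U = 1)
    (hA : A = U * diagonal d * Uᵀ) (e : ι → ℝ) :
    ∑ a, ∑ b, (A * U - U * diagonal e) a b ^ 2 = ∑ i, (d i - e i) ^ 2 := by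
  have hAU : A * U - U * diagonal e = U * diagonal (d - e) := by
    rw [hA, Matrix.mul_assoc, hU, Matrix.mul_one, ← Matrix.mul_sub, diagonal_sub]
    rfl
  rw [hAU, sum_sq_mul_apply_of_transpose_mul_self_eq_one hU]
  simp [diagonal_apply, apply_ite (· ^ 2 : ℝ → ℝ)]

end Spectral

/-- For real symmetric matrices compared with orthogonal alignments and the
Frobenius norm, the Fermat distance equals the geometric-median value of the
sorted eigenvalue spectra:
`min_{C, P_i orth} ∑ ⦀A_i P_i − P_i C⦀_F = min_{Λ_C ∈ ℝ^m} ∑ ‖Λ_{A_i} − Λ_C‖₂`. -/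
theorem fermat_orthogonal_spectra {m n : ℕ}
    (A : Fin n → Matrix (Fin m) (Fin m) ℝ)
    (hA : ∀ i, (A i).IsHermitian)
    (Λ : Fin n → Fin m → ℝ)
    (hΛ_mono : ∀ i, Monotone (Λ i))
    (hΛ : ∀ i, ∃ σ : Equiv.Perm (Fin m), ∀ a, Λ i a = (hA i).eigenvalues (σ a))
    (dF : ℝ)
    (hdF : IsLeast {x : ℝ | ∃ C : Matrix (Fin m) (Fin m) ℝ, C.IsSymm ∧
        ∃ P : Fin n → Matrix (Fin m) (Fin m) ℝ,
          (∀ i, P i * (P i)ᵀ = 1 ∧ (P i)ᵀ * P i = 1) ∧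
          x = ∑ i, Real.sqrt (∑ a, ∑ b, ((A i * P i - P i * C) a b) ^ 2)} dF) :
    IsLeast {y : ℝ | ∃ ΛC : Fin m → ℝ,
        y = ∑ i, Real.sqrt (∑ a, (Λ i a - ΛC a) ^ 2)} dF := by
  have spectral : ∀ i, ∃ U : Matrix (Fin m) (Fin m) ℝ,
      Uᵀ * U = 1 ∧ A i = U * diagonal (Λ i) * Uᵀ := fun i => by
    obtain ⟨σ, hσ⟩ := hΛ i
    exact (hA i).exists_eq_mul_diagonal_mul_transpose σ hσ
  choose U hU hAU using spectral
  have lower : ∀ ΛC : Fin m → ℝ, dF ≤ ∑ i, √(∑ a, (Λ i a - ΛC a) ^ 2) := fun ΛC =>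
    hdF.2 ⟨diagonal ΛC, isSymm_diagonal ΛC, U,
      fun i => ⟨mul_eq_one_comm.mp (hU i), hU i⟩,
      sum_congr rfl fun i _ => by rw [sum_sq_mul_sub_mul_diagonal_eq (hU i) (hAU i)]⟩
  obtain ⟨C, hC, P, hP, hdF_eq⟩ := hdF.1
  have hCh : C.IsHermitian := isHermitian_iff_isSymm.mpr hC
  obtain ⟨V, hV, hCV⟩ := hCh.exists_eq_mul_diagonal_mul_transpose (Tuple.sort hCh.eigenvalues)
    (fun _ => rfl)
  set μ := hCh.eigenvalues ∘ Tuple.sort hCh.eigenvalues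
  have upper : ∑ i, √(∑ a, (Λ i a - μ a) ^ 2) ≤ dF := by
    rw [hdF_eq]
    refine sum_le_sum fun i _ => Real.sqrt_le_sqrt ?_
    exact hoffman_wielandt_s12 (hU i) hV (hAU i) hCV (hΛ_mono i)
      (Tuple.monotone_sort hCh.eigenvalues) (hP i).2
  exact ⟨⟨μ, le_antisymm (lower μ) upper⟩, fun y ⟨ΛC, hy⟩ => hy ▸ lower ΛC⟩
end

section
/- Let {P_{i,j}}_{i,j∈[n]} be m×m invertible real matrices with P_{i,i} = I for all i, and let 𝐏 ∈ ℝ^{nm×nm} be the block matrix with (i,j)-th block P_{i,j}. Then rank(𝐏) = m if and only if the family is alignment-consistent, i.e., P_{i,k}P_{k,j} = P_{i,j} for all i,j,k ∈ [n]. -/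
/-!
Since `P k k = 1`, the `k`-th block column `C` of `Pbig` has rank `m`. Hence `rank Pbig = m`
exactly when `C` spans the column space of `Pbig`, i.e. `Pbig = C * W` for some `W`; reading this
on the `k`-th block row forces `W` to be that block row, and blockwise the factorization says
`P i j = P i k * P k j`.
-/

namespace Matrix

variable {K ι κ μ ν : Type*}

theorem exists_mul_eq_of_range_mulVecLin_le [CommSemiring K] [Fintype μ] [Fintype ν]
    {A : Matrix ι μ K} {B : Matrix ι ν K}
    (h : LinearMap.range B.mulVecLin ≤ LinearMap.range A.mulVecLin) :
    ∃ W : Matrix μ ν K, A * W = B := by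
  have hcol : ∀ b, ∃ w, A *ᵥ w = B.col b := fun b =>
    h (by rw [range_mulVecLin]; exact Submodule.subset_span ⟨b, rfl⟩)
  choose w hw using hcol
  exact ⟨(of w)ᵀ, ext fun a b => congrFun (hw b) a⟩

theorem card_le_rank_of_submatrix_eq_one [Field K] [Fintype κ] [Fintype μ] [DecidableEq μ]
    {M : Matrix ι κ K} {r : μ → ι} {c : μ → κ} (h : M.submatrix r c = 1) :
    Fintype.card μ ≤ M.rank := by
  simpa [h, rank_one] using M.rank_submatrix_le r c

theorem rank_eq_card_iff_eq_mul_of_submatrix_eq_one [Field K] [Fintype κ] [Fintype μ]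
    [DecidableEq μ] {M : Matrix ι κ K} {r : μ → ι} {c : μ → κ} (h : M.submatrix r c = 1) :
    M.rank = Fintype.card μ ↔ M = M.submatrix id c * M.submatrix r id := by
  set A := M.submatrix id c
  have hA : A.rank = Fintype.card μ :=
    le_antisymm A.rank_le_card_width (card_le_rank_of_submatrix_eq_one (r := r) (c := id) h)
  constructor
  · intro hM
    have hle : LinearMap.range A.mulVecLin ≤ LinearMap.range M.mulVecLin := by
      rw [range_mulVecLin, range_mulVecLin]
      exact Submodule.span_mono (Set.range_comp_subset_range c M.col)
    have hrange : LinearMap.range A.mulVecLin = LinearMap.range M.mulVecLin :=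
      Submodule.eq_of_le_of_finrank_le hle (by rw [← rank, ← rank, hM, hA])
    obtain ⟨W, hW⟩ := exists_mul_eq_of_range_mulVecLin_le hrange.ge
    have hrows : M.submatrix r id = W := by
      rw [← hW, submatrix_mul _ _ _ id _ Function.bijective_id]
      simp [A, h]
    rw [hrows, hW]
  · intro hM
    refine le_antisymm ?_ (card_le_rank_of_submatrix_eq_one h)
    calc M.rank = (A * M.submatrix r id).rank := by rw [← hM]
      _ ≤ A.rank := rank_mul_le_left _ _
      _ = Fintype.card μ := hA

theorem eq_mul_submatrix_prodMk_iff [NonUnitalNonAssocSemiring K] [Fintype μ]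
    (M : Matrix (ι × μ) (ι × μ) K) (k : ι) :
    M = M.submatrix id (Prod.mk k) * M.submatrix (Prod.mk k) id ↔
      ∀ i j, M.submatrix (Prod.mk i) (Prod.mk k) * M.submatrix (Prod.mk k) (Prod.mk j) =
        M.submatrix (Prod.mk i) (Prod.mk j) := by
  constructor
  · intro h i j
    conv_rhs => rw [h]
    ext a b
    rfl
  · intro h
    ext ⟨i, a⟩ ⟨j, b⟩
    exact (congrFun₂ (h i j) a b).symm

end Matrix

open Matrix

theorem rank_block_matrix_iff_consistent_general {m n : ℕ} (hn : 0 < n)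
    (P : Fin n → Fin n → Matrix (Fin m) (Fin m) ℝ)
    (hdiag : ∀ i, P i i = 1)
    (Pbig : Matrix (Fin n × Fin m) (Fin n × Fin m) ℝ)
    (hPbig : ∀ i j a b, Pbig (i, a) (j, b) = P i j a b) :
    Pbig.rank = m ↔ ∀ i j k, P i k * P k j = P i j := by
  have hblock : ∀ i j, Pbig.submatrix (Prod.mk i) (Prod.mk j) = P i j := fun i j =>
    ext (hPbig i j)
  have hrank : ∀ k, Pbig.rank = m ↔ ∀ i j, P i k * P k j = P i j := fun k => by
    have hkk : Pbig.submatrix (Prod.mk k) (Prod.mk k) = 1 := (hblock k k).trans (hdiag k)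
    simpa only [Fintype.card_fin, eq_mul_submatrix_prodMk_iff, hblock] using
      rank_eq_card_iff_eq_mul_of_submatrix_eq_one hkk
  exact ⟨fun h i j k => (hrank k).1 h i j, fun h => (hrank ⟨0, hn⟩).2 fun i j => h i j _⟩

/-- For a family of invertible matrices `P i j` with `P i i = 1`, the block
matrix `Pbig` (with `(i,j)`-block `P i j`) has rank `m` if and only if the family
is alignment-consistent. -/
theorem rank_block_matrix_iff_consistent {m n : ℕ} (hn : 0 < n)
    (P : Fin n → Fin n → Matrix (Fin m) (Fin m) ℝ)
    (hinv : ∀ i j, IsUnit (P i j))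
    (hdiag : ∀ i, P i i = 1)
    (Pbig : Matrix (Fin n × Fin m) (Fin n × Fin m) ℝ)
    (hPbig : ∀ i j a b, Pbig (i, a) (j, b) = P i j a b) :
    Pbig.rank = m ↔ ∀ i j k, P i k * P k j = P i j :=
  rank_block_matrix_iff_consistent_general hn P hdiag Pbig hPbig
end

section
/- Let {P_{i,j}}_{i,j∈[n]} be an alignment-consistent family of m×m orthogonal matrices (P_{i,k}P_{k,j} = P_{i,j}, P_{i,i} = I), and let 𝐏 ∈ ℝ^{nm×nm} be the block matrix with (i,j)-th block P_{i,j}. Then 𝐏 = AAᵀ for A = [P_{1,n}; ...; P_{n,n}] ∈ ℝ^{nm×m}, 𝐏 is positive semidefinite, and its nuclear norm equals mn. -/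
/-!
Consistency and orthogonality give `(P i j)ᵀ = P j i`, hence
`P i j = P i k * P k j = P i k * (P j k)ᵀ` for every fixed `k`: the block matrix is `A * Aᵀ` with
`A` the `k`-th block column, so it is positive semidefinite. For a positive semidefinite `M`, the
eigenvalues of `Mᵀ * M = M ^ 2` are the squares of those of `M`, so the nuclear norm of `M` is its
trace, here `∑ i, trace (P i i) = m * n`.
-/

open Matrix

noncomputable def nuclearNorm {ι : Type*} [Fintype ι] [DecidableEq ι]
    (M : Matrix ι ι ℝ) : ℝ :=
  ∑ i, Real.sqrt ((show (Mᵀ * M).IsHermitian by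
    rw [IsHermitian, conjTranspose_eq_transpose_of_trivial, transpose_mul,
      transpose_transpose]).eigenvalues i)

open Polynomial

theorem Matrix.IsHermitian.sum_comp_eigenvalues_of_charpoly_eq {ι 𝕜 : Type*} [Fintype ι]
    [DecidableEq ι] [RCLike 𝕜] {A : Matrix ι ι 𝕜} (hA : A.IsHermitian) {d : ι → ℝ}
    (h : A.charpoly = ∏ i, (X - C (d i : 𝕜))) (f : ℝ → ℝ) :
    ∑ i, f (hA.eigenvalues i) = ∑ i, f (d i) := by
  have hroots : Finset.univ.val.map hA.eigenvalues = Finset.univ.val.map d := by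
    have hchar : A.charpoly =
        ((Finset.univ.val.map (RCLike.ofReal ∘ d)).map fun a : 𝕜 => X - C a).prod := by
      rw [h, Multiset.map_map]; rfl
    have := hA.roots_charpoly_eq_eigenvalues
    rw [hchar, roots_multiset_prod_X_sub_C, ← Multiset.map_map, ← Multiset.map_map] at this
    exact (Multiset.map_injective RCLike.ofReal_injective this).symm
  have := congrArg (fun s => (s.map f).sum) hroots
  simpa only [Finset.sum_eq_multiset_sum, Multiset.map_map, Function.comp_def] using this

theorem nuclearNorm_eq_sum_abs_eigenvalues {ι : Type*} [Fintype ι] [DecidableEq ι]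
    {M : Matrix ι ι ℝ} (hM : M.IsHermitian) :
    nuclearNorm M = ∑ i, |hM.eigenvalues i| := by
  have hsq : Mᵀ * M = cfc (· ^ 2 : ℝ → ℝ) M := by
    rw [cfc_pow_id M 2 hM.isSelfAdjoint, sq, ← conjTranspose_eq_transpose_of_trivial, hM.eq]
  unfold nuclearNorm
  rw [IsHermitian.sum_comp_eigenvalues_of_charpoly_eq _ (hsq ▸ hM.charpoly_cfc_eq _)]
  simp [Real.sqrt_sq_eq_abs]

theorem Matrix.PosSemidef.nuclearNorm_eq_trace {ι : Type*} [Fintype ι] [DecidableEq ι]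
    {M : Matrix ι ι ℝ} (hM : M.PosSemidef) : nuclearNorm M = M.trace := by
  rw [nuclearNorm_eq_sum_abs_eigenvalues hM.isHermitian, hM.isHermitian.trace_eq_sum_eigenvalues]
  simp [abs_of_nonneg (hM.eigenvalues_nonneg _)]

section ConsistentFamily

variable {ι α R : Type*} [Fintype α] {P : ι → ι → Matrix α α R}

theorem trace_eq_sum_trace_blocks [Fintype ι] [AddCommMonoid R]
    {B : Matrix (ι × α) (ι × α) R} (hB : ∀ i j a b, B (i, a) (j, b) = P i j a b) :
    B.trace = ∑ i, (P i i).trace := by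
  simp only [trace, Fintype.sum_prod_type, diag_apply, hB]

theorem transpose_eq_of_consistent [DecidableEq α] [CommRing R]
    (horth : ∀ i j, (P i j)ᵀ * P i j = 1) (hcons : ∀ i j k, P i k * P k j = P i j)
    (hdiag : ∀ i, P i i = 1) (i j : ι) :
    (P i j)ᵀ = P j i :=
  left_inv_eq_right_inv (horth i j) (by rw [hcons, hdiag])

theorem eq_mul_transpose_of_consistent [DecidableEq α] [CommRing R]
    (horth : ∀ i j, (P i j)ᵀ * P i j = 1) (hcons : ∀ i j k, P i k * P k j = P i j)
    (hdiag : ∀ i, P i i = 1)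
    {B : Matrix (ι × α) (ι × α) R} (hB : ∀ i j a b, B (i, a) (j, b) = P i j a b)
    (k : ι) {A : Matrix (ι × α) α R} (hA : ∀ i a b, A (i, a) b = P i k a b) :
    B = A * Aᵀ := by
  ext ⟨i, a⟩ ⟨j, b⟩
  have hblock : (A * Aᵀ) (i, a) (j, b) = (P i k * (P j k)ᵀ) a b := by
    simp only [mul_apply, transpose_apply, hA]
  rw [hblock, transpose_eq_of_consistent horth hcons hdiag, hcons, hB]

end ConsistentFamily

theorem block_matrix_of_consistent_orthogonal_general {m n : ℕ}
    (P : Fin n → Fin n → Matrix (Fin m) (Fin m) ℝ)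
    (horth : ∀ i j, P i j * (P i j)ᵀ = 1 ∧ (P i j)ᵀ * P i j = 1)
    (hcons : ∀ i j k, P i k * P k j = P i j)
    (hdiag : ∀ i, P i i = 1)
    (j₀ : Fin n)
    (Pbig : Matrix (Fin n × Fin m) (Fin n × Fin m) ℝ)
    (hPbig : ∀ i j a b, Pbig (i, a) (j, b) = P i j a b)
    (Amat : Matrix (Fin n × Fin m) (Fin m) ℝ)
    (hAmat : ∀ i a b, Amat (i, a) b = P i j₀ a b) :
    Pbig = Amat * Amatᵀ ∧ Pbig.PosSemidef ∧ nuclearNorm Pbig = m * n := by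
  have hfac : Pbig = Amat * Amatᵀ :=
    eq_mul_transpose_of_consistent (fun i j ↦ (horth i j).2) hcons hdiag hPbig j₀ hAmat
  have hpsd : Pbig.PosSemidef := hfac ▸ posSemidef_self_mul_conjTranspose Amat
  refine ⟨hfac, hpsd, ?_⟩
  rw [hpsd.nuclearNorm_eq_trace, trace_eq_sum_trace_blocks hPbig]
  simp [hdiag, mul_comm]

/-- For an alignment-consistent family of orthogonal matrices, the block matrix
`𝐏` factors as `A Aᵀ` with `A = [P_{1,n}; ...; P_{n,n}]`, is positive
semidefinite, and has nuclear norm `m * n`. -/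
theorem block_matrix_of_consistent_orthogonal {m n : ℕ}
    (P : Fin n → Fin n → Matrix (Fin m) (Fin m) ℝ)
    (horth : ∀ i j, P i j * (P i j)ᵀ = 1 ∧ (P i j)ᵀ * P i j = 1)
    (hcons : ∀ i j k, P i k * P k j = P i j)
    (hdiag : ∀ i, P i i = 1)
    (j₀ : Fin n) (hj₀ : (j₀ : ℕ) = n - 1)
    (Pbig : Matrix (Fin n × Fin m) (Fin n × Fin m) ℝ)
    (hPbig : ∀ i j a b, Pbig (i, a) (j, b) = P i j a b)
    (Amat : Matrix (Fin n × Fin m) (Fin m) ℝ)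
    (hAmat : ∀ i a b, Amat (i, a) b = P i j₀ a b) :
    Pbig = Amat * Amatᵀ ∧ Pbig.PosSemidef ∧ nuclearNorm Pbig = m * n :=
  block_matrix_of_consistent_orthogonal_general P horth hcons hdiag j₀ Pbig hPbig Amat hAmat
end

section
/- Let s be a modified P-score on Ω² × 𝒫, where 𝒫 is closed under transposition and multiplication, contains I, and every P ∈ 𝒫 has operator 2-norm at most 1. Then the symmetric continuous 𝒢-align function d_{sc𝒢}(A_{1:n}) = min over {P_{i,j} ∈ 𝒫 : P_{i,i} = I, block matrix 𝐏 ⪰ 0} of (1/2)Σ_{i,j∈[n]} s(A_i,A_j,P_{i,j}) is a pseudo n-metric: non-negative, permutation-symmetric, d_{sc𝒢}(A,...,A) = 0, and satisfies the generalized triangle inequality d_{sc𝒢}(A_{1:n}) ≤ Σ_{ℓ=1}^n d_{sc𝒢}(A^ℓ_{1:n,n+1}). -/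
open Matrix
open scoped Matrix.Norms.L2Operator

/-!
Let `P^ℓ` be an optimal alignment of the tuple `A` with its `ℓ`-th entry replaced by `A'`.
For each `i`, pick among the blocks `P^ℓ_{i,ℓ}` (`ℓ ≠ i`) one, `Γᵢ`, minimising
`tᵢ := s(Aᵢ, A', Γᵢ)`. The hub alignment with off-diagonal blocks `Γᵢ Γⱼᵀ` is feasible for `A`:
its block matrix is `G Gᵀ`, for `G` the column of the `Γᵢ`, plus the block diagonal of the
positive semidefinite matrices `1 - Γᵢ Γᵢᵀ`. By the triangle inequality through `A'` it costs at
most `(n - 1) ∑ᵢ tᵢ`. Conversely, row and column `ℓ` alone make the cost of `P^ℓ` at least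
`∑_{i ≠ ℓ} tᵢ`, and summing over `ℓ` gives the same bound `(n - 1) ∑ᵢ tᵢ`.
-/

open Finset

section BigOperators

variable {ι M : Type*} [Fintype ι] [DecidableEq ι] [AddCommMonoid M]

theorem Finset.sum_sum_erase_comm (f : ι → ι → M) :
    ∑ i, ∑ j ∈ univ.erase i, f i j = ∑ j, ∑ i ∈ univ.erase j, f i j :=
  sum_comm' fun i j => by simp [ne_comm]

theorem Finset.sum_erase_add_sum_erase_le_sum_sum [PartialOrder M] [IsOrderedAddMonoid M]
    {f : ι → ι → M} (hf : ∀ i j, 0 ≤ f i j) (ℓ : ι) :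
    ∑ i ∈ univ.erase ℓ, f i ℓ + ∑ j ∈ univ.erase ℓ, f ℓ j ≤ ∑ i, ∑ j, f i j := by
  calc _ ≤ ∑ i ∈ univ.erase ℓ, ∑ j, f i j + ∑ j, f ℓ j :=
        add_le_add (sum_le_sum fun i _ => single_le_sum (fun j _ => hf i j) (mem_univ ℓ))
          (sum_le_sum_of_subset_of_nonneg (erase_subset _ _) fun j _ _ => hf ℓ j)
    _ = ∑ i, ∑ j, f i j := by
        rw [add_comm]
        exact add_sum_erase _ (fun i => ∑ j, f i j) (mem_univ ℓ)

end BigOperators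

theorem Set.Nonempty.exists_mem_forall_le_apply {α β ι : Type*} [LinearOrder β] {𝓟 : Set α}
    (h𝓟 : 𝓟.Nonempty) (S : Finset ι) {g : ι → α} (hg : ∀ ℓ ∈ S, g ℓ ∈ 𝓟) (f : α → β) :
    ∃ x ∈ 𝓟, ∀ ℓ ∈ S, f x ≤ f (g ℓ) := by
  rcases S.eq_empty_or_nonempty with rfl | hS
  · obtain ⟨x, hx⟩ := h𝓟
    exact ⟨x, hx, by simp⟩
  · obtain ⟨ℓ, hℓ, hmin⟩ := S.exists_min_image (f ∘ g) hS
    exact ⟨g ℓ, hg ℓ hℓ, hmin⟩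

namespace Matrix

variable {ι κ μ : Type*} [Fintype κ]

theorem dotProduct_self_eq_norm_sq_euclidean (x : κ → ℝ) :
    x ⬝ᵥ x = ‖(EuclideanSpace.equiv κ ℝ).symm x‖ ^ 2 := by
  rw [← real_inner_self_eq_norm_sq]; rfl

theorem dotProduct_mulVec_self_le_of_l2_opNorm_le_one [Fintype μ] [DecidableEq κ]
    {A : Matrix μ κ ℝ} (hA : ‖A‖ ≤ 1) (x : κ → ℝ) : A *ᵥ x ⬝ᵥ A *ᵥ x ≤ x ⬝ᵥ x := by
  rw [dotProduct_self_eq_norm_sq_euclidean, dotProduct_self_eq_norm_sq_euclidean]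
  gcongr
  exact (A.l2_opNorm_mulVec _).trans (mul_le_of_le_one_left (norm_nonneg _) hA)

theorem posSemidef_one_sub_mul_transpose_of_l2_opNorm_le_one [DecidableEq κ] {A : Matrix κ κ ℝ}
    (hA : ‖A‖ ≤ 1) : (1 - A * Aᵀ).PosSemidef := by
  have hAt : ‖Aᵀ‖ ≤ 1 := by
    rwa [← conjTranspose_eq_transpose_of_trivial, l2_opNorm_conjTranspose]
  refine .of_dotProduct_mulVec_nonneg ?_ fun x => ?_
  · simp [IsHermitian, conjTranspose_eq_transpose_of_trivial, transpose_sub]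
  · have := dotProduct_mulVec_self_le_of_l2_opNorm_le_one hAt x
    simp only [star_trivial, sub_mulVec, one_mulVec, dotProduct_sub, ← mulVec_mulVec,
      dotProduct_mulVec x A, ← mulVec_transpose]
    linarith

open scoped ComplexOrder MatrixOrder in
theorem PosSemidef.blockDiagonal {𝕜 : Type*} [RCLike 𝕜] [Fintype ι] [DecidableEq ι]
    [DecidableEq κ] {M : ι → Matrix κ κ 𝕜} (hM : ∀ i, (M i).PosSemidef) :
    (blockDiagonal M).PosSemidef := by
  choose C hC using fun i => CStarAlgebra.nonneg_iff_eq_star_mul_self.mp (hM i).nonneg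
  simp only [funext hC, star_eq_conjTranspose, blockDiagonal_mul, ← blockDiagonal_conjTranspose]
  exact posSemidef_conjTranspose_mul_self _

theorem posSemidef_comp_ite_one_mul_transpose [Fintype ι] [DecidableEq ι] [DecidableEq κ]
    {Γ : ι → Matrix κ κ ℝ} (hΓ : ∀ i, ‖Γ i‖ ≤ 1) :
    (comp ι ι κ κ ℝ (of fun i j => if i = j then 1 else Γ i * (Γ j)ᵀ)).PosSemidef := by
  let G : Matrix (ι × κ) κ ℝ := of fun p => Γ p.1 p.2
  have hsplit : comp ι ι κ κ ℝ (of fun i j => if i = j then 1 else Γ i * (Γ j)ᵀ) =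
      G * Gᴴ + (blockDiagonal fun i => 1 - Γ i * (Γ i)ᵀ).submatrix Prod.swap Prod.swap := by
    ext ⟨i, k⟩ ⟨j, l⟩
    by_cases hij : i = j
    · subst hij; simp [G, comp_apply, mul_apply, blockDiagonal_apply]
    · simp [G, comp_apply, hij, mul_apply, blockDiagonal_apply]
  rw [hsplit]
  exact (posSemidef_self_mul_conjTranspose G).add <| (PosSemidef.blockDiagonal fun i =>
    posSemidef_one_sub_mul_transpose_of_l2_opNorm_le_one (hΓ i)).submatrix _

end Matrix

section Alignment

variable {ι ι' κ Ω : Type*} {𝓟 : Set (Matrix κ κ ℝ)} {s : Ω → Ω → Matrix κ κ ℝ → ℝ}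

structure IsAlignment [DecidableEq κ] (𝓟 : Set (Matrix κ κ ℝ)) (P : ι → ι → Matrix κ κ ℝ) :
    Prop where
  mem : ∀ i j, P i j ∈ 𝓟
  diag : ∀ i, P i i = 1
  posSemidef : (comp ι ι κ κ ℝ (of P)).PosSemidef

noncomputable def alignCost [Fintype ι] (s : Ω → Ω → Matrix κ κ ℝ → ℝ) (A : ι → Ω)
    (P : ι → ι → Matrix κ κ ℝ) : ℝ :=
  (1 / 2) * ∑ i, ∑ j, s (A i) (A j) (P i j)

def hubAlignment [DecidableEq ι] [Fintype κ] [DecidableEq κ] (Γ : ι → Matrix κ κ ℝ) :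
    ι → ι → Matrix κ κ ℝ :=
  fun i j => if i = j then 1 else Γ i * (Γ j)ᵀ

theorem IsAlignment.transpose_apply [DecidableEq κ] {P : ι → ι → Matrix κ κ ℝ}
    (hP : IsAlignment 𝓟 P) (i j : ι) : (P i j)ᵀ = P j i := by
  ext k l
  exact (hP.posSemidef.isHermitian.apply (i, l) (j, k)).symm

theorem IsAlignment.comp [DecidableEq κ] {P : ι → ι → Matrix κ κ ℝ} (hP : IsAlignment 𝓟 P)
    (e : ι' → ι) :
    IsAlignment 𝓟 fun i j => P (e i) (e j) :=
  ⟨fun _ _ => hP.mem _ _, fun _ => hP.diag _, hP.posSemidef.submatrix (Prod.map e id)⟩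

theorem isAlignment_hubAlignment [Fintype ι] [DecidableEq ι] [Fintype κ] [DecidableEq κ]
    (hI : 1 ∈ 𝓟) (htrans : ∀ P ∈ 𝓟, Pᵀ ∈ 𝓟)
    (hmul : ∀ P ∈ 𝓟, ∀ Q ∈ 𝓟, P * Q ∈ 𝓟) {Γ : ι → Matrix κ κ ℝ} (hΓ : ∀ i, Γ i ∈ 𝓟)
    (hnorm : ∀ i, ‖Γ i‖ ≤ 1) : IsAlignment 𝓟 (hubAlignment Γ) where
  mem i j := by
    unfold hubAlignment
    split_ifs
    exacts [hI, hmul _ (hΓ i) _ (htrans _ (hΓ j))]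
  diag i := if_pos rfl
  posSemidef := posSemidef_comp_ite_one_mul_transpose hnorm

theorem isAlignment_const_one [Fintype ι] [Fintype κ] [DecidableEq κ] (hI : 1 ∈ 𝓟) :
    IsAlignment 𝓟 fun (_ _ : ι) => 1 := by
  classical
  have h1 : ‖(1 : Matrix κ κ ℝ)‖ ≤ 1 := by
    rw [cstar_norm_def, map_one]
    exact ContinuousLinearMap.norm_id_le
  refine ⟨fun _ _ => hI, fun _ => rfl, ?_⟩
  simpa using posSemidef_comp_ite_one_mul_transpose (ι := ι) fun _ => h1

theorem alignCost_nonneg [Fintype ι] (hs_nonneg : ∀ A B P, 0 ≤ s A B P) (A : ι → Ω)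
    (P : ι → ι → Matrix κ κ ℝ) : 0 ≤ alignCost s A P :=
  mul_nonneg (by norm_num) <| sum_nonneg fun _ _ => sum_nonneg fun _ _ => hs_nonneg _ _ _

theorem alignCost_comp_equiv [Fintype ι] [Fintype ι'] (e : ι' ≃ ι) (A : ι → Ω)
    (P : ι → ι → Matrix κ κ ℝ) :
    alignCost s (A ∘ e) (fun i j => P (e i) (e j)) = alignCost s A P :=
  congrArg _ <| Fintype.sum_equiv e _ (fun i => ∑ j, s (A i) (A j) (P i j)) fun i =>
    Fintype.sum_equiv e _ (fun j => s (A (e i)) (A j) (P (e i) j)) fun _ => rfl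

theorem alignCost_hubAlignment_le [Fintype ι] [DecidableEq ι] [Fintype κ] [DecidableEq κ]
    (hs_id : ∀ A, s A A 1 = 0) (hs_symm : ∀ A B P, s A B P = s B A Pᵀ)
    (hs_tri : ∀ A B C P P', s A C (P * P') ≤ s A B P + s B C P')
    (A : ι → Ω) (A' : Ω) (Γ : ι → Matrix κ κ ℝ) :
    alignCost s A (hubAlignment Γ) ≤ ∑ i, ∑ _j ∈ univ.erase i, s (A i) A' (Γ i) := by
  set t := fun i => s (A i) A' (Γ i)
  have hoff : ∀ i, ∀ j ∈ univ.erase i, s (A i) (A j) (hubAlignment Γ i j) ≤ t i + t j := by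
    intro i j hj
    rw [hubAlignment, if_neg (ne_of_mem_erase hj).symm]
    calc _ ≤ t i + s A' (A j) (Γ j)ᵀ := hs_tri _ _ _ _ _
      _ = t i + t j := by rw [hs_symm A', transpose_transpose]
  have hdiag : ∀ i, s (A i) (A i) (hubAlignment Γ i i) = 0 := by simp [hubAlignment, hs_id]
  calc alignCost s A (hubAlignment Γ)
      = (1 / 2) * ∑ i, ∑ j ∈ univ.erase i, s (A i) (A j) (hubAlignment Γ i j) := by
        refine congrArg _ <| sum_congr rfl fun i _ => (sum_erase univ ?_).symm
        exact hdiag i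
    _ ≤ (1 / 2) * ∑ i, ∑ j ∈ univ.erase i, (t i + t j) := by
        gcongr with i _ j hj
        exact hoff i j hj
    _ = (1 / 2) * (∑ i, ∑ _j ∈ univ.erase i, t i + ∑ i, ∑ j ∈ univ.erase i, t j) := by
        simp only [sum_add_distrib]
    _ = ∑ i, ∑ _j ∈ univ.erase i, t i := by rw [sum_sum_erase_comm fun _ j => t j]; ring

theorem sum_erase_le_alignCost_update [Fintype ι] [DecidableEq ι]
    (hs_nonneg : ∀ A B P, 0 ≤ s A B P) (hs_symm : ∀ A B P, s A B P = s B A Pᵀ)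
    {P : ι → ι → Matrix κ κ ℝ} (hP : ∀ i j, (P i j)ᵀ = P j i) (A : ι → Ω) (A' : Ω) (ℓ : ι) :
    ∑ i ∈ univ.erase ℓ, s (A i) A' (P i ℓ) ≤ alignCost s (Function.update A ℓ A') P := by
  set B := Function.update A ℓ A'
  have hcol : ∑ i ∈ univ.erase ℓ, s (A i) A' (P i ℓ) =
      ∑ i ∈ univ.erase ℓ, s (B i) (B ℓ) (P i ℓ) :=
    sum_congr rfl fun i hi => by simp [B, ne_of_mem_erase hi]
  have hrow : ∑ i ∈ univ.erase ℓ, s (A i) A' (P i ℓ) =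
      ∑ j ∈ univ.erase ℓ, s (B ℓ) (B j) (P ℓ j) :=
    sum_congr rfl fun j hj => by simp [B, ne_of_mem_erase hj, hs_symm A', hP]
  have := sum_erase_add_sum_erase_le_sum_sum (fun i j => hs_nonneg (B i) (B j) (P i j)) ℓ
  unfold alignCost
  linarith

def IsMinAlignCost [Fintype ι] [DecidableEq κ] (𝓟 : Set (Matrix κ κ ℝ))
    (s : Ω → Ω → Matrix κ κ ℝ → ℝ) (d : (ι → Ω) → ℝ) : Prop :=
  ∀ A, IsLeast (alignCost s A '' {P | IsAlignment 𝓟 P}) (d A)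

namespace IsMinAlignCost

variable [Fintype ι] [DecidableEq κ] {d : (ι → Ω) → ℝ} (hd : IsMinAlignCost 𝓟 s d)
include hd

theorem le_alignCost {A : ι → Ω} {P : ι → ι → Matrix κ κ ℝ} (hP : IsAlignment 𝓟 P) :
    d A ≤ alignCost s A P :=
  (hd A).2 ⟨P, hP, rfl⟩

theorem exists_alignCost_eq (A : ι → Ω) : ∃ P, IsAlignment 𝓟 P ∧ alignCost s A P = d A :=
  (hd A).1

theorem nonneg (hs_nonneg : ∀ A B P, 0 ≤ s A B P) (A : ι → Ω) : 0 ≤ d A := by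
  obtain ⟨P, -, hP⟩ := hd.exists_alignCost_eq A
  exact hP ▸ alignCost_nonneg hs_nonneg A P

theorem comp_perm (A : ι → Ω) (σ : Equiv.Perm ι) : d (A ∘ σ) = d A := by
  have hle : ∀ (A : ι → Ω) (σ : Equiv.Perm ι), d (A ∘ σ) ≤ d A := fun A σ => by
    obtain ⟨P, hP, hcost⟩ := hd.exists_alignCost_eq A
    rw [← hcost, ← alignCost_comp_equiv σ]
    exact hd.le_alignCost (hP.comp σ)
  refine (hle A σ).antisymm ?_
  simpa [Function.comp_assoc] using hle (A ∘ σ) σ⁻¹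

theorem apply_const [Fintype κ] (hI : 1 ∈ 𝓟) (hs_nonneg : ∀ A B P, 0 ≤ s A B P)
    (hs_id : ∀ A, s A A 1 = 0) (a : Ω) : d (fun _ => a) = 0 :=
  le_antisymm
    ((hd.le_alignCost (isAlignment_const_one hI)).trans_eq (by simp [alignCost, hs_id]))
    (hd.nonneg hs_nonneg _)

theorem le_sum_update [Fintype κ] [DecidableEq ι] (hI : 1 ∈ 𝓟) (htrans : ∀ P ∈ 𝓟, Pᵀ ∈ 𝓟)
    (hmul : ∀ P ∈ 𝓟, ∀ Q ∈ 𝓟, P * Q ∈ 𝓟) (hnorm : ∀ P ∈ 𝓟, ‖P‖ ≤ 1)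
    (hs_nonneg : ∀ A B P, 0 ≤ s A B P) (hs_id : ∀ A, s A A 1 = 0)
    (hs_symm : ∀ A B P, s A B P = s B A Pᵀ)
    (hs_tri : ∀ A B C P P', s A C (P * P') ≤ s A B P + s B C P') (A : ι → Ω) (A' : Ω) :
    d A ≤ ∑ ℓ, d (Function.update A ℓ A') := by
  choose P hP hcost using fun ℓ => hd.exists_alignCost_eq (Function.update A ℓ A')
  choose Γ hΓ hmin using fun i => Set.Nonempty.exists_mem_forall_le_apply ⟨1, hI⟩
    (univ.erase i) (g := fun ℓ => P ℓ i ℓ) (fun ℓ _ => (hP ℓ).mem i ℓ) (s (A i) A')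
  calc d A ≤ alignCost s A (hubAlignment Γ) :=
        hd.le_alignCost (isAlignment_hubAlignment hI htrans hmul hΓ fun i => hnorm _ (hΓ i))
    _ ≤ ∑ i, ∑ _ℓ ∈ univ.erase i, s (A i) A' (Γ i) :=
        alignCost_hubAlignment_le hs_id hs_symm hs_tri A A' Γ
    _ ≤ ∑ i, ∑ ℓ ∈ univ.erase i, s (A i) A' (P ℓ i ℓ) :=
        sum_le_sum fun i _ => sum_le_sum (hmin i)
    _ = ∑ ℓ, ∑ i ∈ univ.erase ℓ, s (A i) A' (P ℓ i ℓ) := sum_sum_erase_comm _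
    _ ≤ ∑ ℓ, d (Function.update A ℓ A') := sum_le_sum fun ℓ _ => hcost ℓ ▸
        sum_erase_le_alignCost_update hs_nonneg hs_symm (hP ℓ).transpose_apply A A' ℓ

end IsMinAlignCost

end Alignment

/-- If `s` is a modified P-score (with `𝓟` closed under transposition and
multiplication, containing `I`, and consisting of operator-norm contractions),
then the symmetric continuous 𝒢-align function `d_{sc𝒢}` is a pseudo
`n`-metric. -/
theorem sym_cont_G_align_is_pseudo_n_metric {m n : ℕ} {Ω : Type*}
    (𝓟 : Set (Matrix (Fin m) (Fin m) ℝ))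
    (hI : (1 : Matrix (Fin m) (Fin m) ℝ) ∈ 𝓟)
    (htrans : ∀ P ∈ 𝓟, Pᵀ ∈ 𝓟)
    (hmul : ∀ P ∈ 𝓟, ∀ Q ∈ 𝓟, P * Q ∈ 𝓟)
    (hnorm : ∀ P ∈ 𝓟, ‖P‖ ≤ 1)
    (s : Ω → Ω → Matrix (Fin m) (Fin m) ℝ → ℝ)
    (hs_nonneg : ∀ A B P, 0 ≤ s A B P)
    (hs_id : ∀ A, s A A 1 = 0)
    (hs_symm : ∀ A B P, s A B P = s B A Pᵀ)
    (hs_tri : ∀ A B C P P', s A C (P * P') ≤ s A B P + s B C P')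
    (dG : (Fin n → Ω) → ℝ)
    (hdG : ∀ A : Fin n → Ω, IsLeast
      {x : ℝ | ∃ P : Fin n → Fin n → Matrix (Fin m) (Fin m) ℝ,
        (∀ i j, P i j ∈ 𝓟) ∧ (∀ i, P i i = 1) ∧
        (Matrix.of fun p q : Fin n × Fin m => P p.1 q.1 p.2 q.2).PosSemidef ∧
        x = (1 / 2) * ∑ i : Fin n, ∑ j : Fin n, s (A i) (A j) (P i j)} (dG A)) :
    (∀ A : Fin n → Ω, 0 ≤ dG A) ∧
    (∀ (A : Fin n → Ω) (σ : Equiv.Perm (Fin n)), dG (A ∘ σ) = dG A) ∧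
    (∀ A : Ω, dG (fun _ => A) = 0) ∧
    (∀ (A : Fin n → Ω) (A' : Ω), dG A ≤ ∑ ℓ : Fin n, dG (Function.update A ℓ A')) := by
  have hd : IsMinAlignCost 𝓟 s dG := fun A => by
    convert hdG A using 1
    ext x
    exact ⟨fun ⟨P, ⟨h𝓟, hdiag, hpsd⟩, hx⟩ => ⟨P, h𝓟, hdiag, hpsd, hx.symm⟩,
      fun ⟨P, h𝓟, hdiag, hpsd, hx⟩ => ⟨P, ⟨h𝓟, hdiag, hpsd⟩, hx.symm⟩⟩
  exact ⟨hd.nonneg hs_nonneg, hd.comp_perm, hd.apply_const hI hs_nonneg hs_id,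
    hd.le_sum_update hI htrans hmul hnorm hs_nonneg hs_id hs_symm hs_tri⟩
end
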